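/- arXiv:2601.19183 — 2 statements merged into one kernel-verified Lean document; each statement's English description precedes it below -/
import Mathlib

section
/- Let G be a graph on {1,…,K} with adjacency matrix A over a field F, α ∈ F^K, and H a K×d matrix with (diag(α)+A)H = 0. Suppose each user k holds input W_k ∈ F and key Z_k = H_{k,:}·N for a vector N ∈ F^d, and broadcasts X_k = W_k + Z_k. Then for every vertex k, α_k·Z_k + Σ_{i ∈ N_k} X_i = Σ_{i ∈ N_k} W_i, i.e., each user exactly recovers the sum of its neighbors' inputs regardless of the values of W and N. -/
/-- exact recovery of the neighborhood input sum under the linear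
secure-aggregation scheme. -/
theorem tsa_recovery
    (K d : ℕ) (F : Type*) [Field F]
    (G : SimpleGraph (Fin K)) [DecidableRel G.Adj]
    (α : Fin K → F) (H : Matrix (Fin K) (Fin d) F)
    (hker : (Matrix.diagonal α + G.adjMatrix F) * H = 0)
    (W : Fin K → F) (N : Fin d → F)
    (Z : Fin K → F) (hZ : ∀ k, Z k = H.mulVec N k)
    (X : Fin K → F) (hX : ∀ k, X k = W k + Z k) :
    ∀ k : Fin K,
      α k * Z k + ∑ i ∈ G.neighborFinset k, X i = ∑ i ∈ G.neighborFinset k, W i := by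
  intro k
  have h0 : ((Matrix.diagonal α + G.adjMatrix F) * H).mulVec N k = 0 := by
    rw [hker]; simp [Matrix.mulVec]
  rw [← Matrix.mulVec_mulVec, Matrix.add_mulVec, Pi.add_apply, Matrix.mulVec_diagonal,
    SimpleGraph.adjMatrix_mulVec_apply] at h0
  simp only [hX, hZ, Finset.sum_add_distrib]
  linear_combination h0
end

section
/- Let M ≥ 3 and let F be a field containing a primitive M-th root of unity ω. Let G be the prism graph on 2M vertices: vertices {0,…,M−1} form a cycle, vertices {M,…,2M−1} form a cycle (vertex M+j adjacent to M+(j±1 mod M)), and each j is adjacent to M+j. Let λ_t = ω^t + ω^{−t} and v_t = (1, ω^t, …, ω^{(M−1)t}) for t ∈ {0, 1, M−1}. Suppose α_1, α_2 ∈ F satisfy (α_1 + λ_t)(α_2 + λ_t) = 1 for all t ∈ {0, 1, M−1}, and let α ∈ F^{2M} have first M entries α_1 and last M entries α_2. Then for each t ∈ {0, 1, M−1}, the vector h_t ∈ F^{2M} whose first M coordinates are v_t and last M coordinates are −(α_1 + λ_t)·v_t satisfies (diag(α) + A)·h_t = 0, where A is the adjacency matrix of G. Hence the kernel of diag(α)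 + A has dimension at least 3 (provided the three vectors h_0, h_1, h_{M−1} are linearly independent, which holds when 1, ω, ω^{−1} are pairwise distinct). -/
lemma myPred {M : ℕ} (hM : 3 ≤ M) {a b : ℕ} (hb : b < M) (hab : (b + 1) % M = a) :
    (a + M - 1) % M = b := by
  calc (a + M - 1) % M = (a + (M - 1)) % M := by congr 1; omega
    _ = ((b + 1) % M + (M - 1) % M) % M := by
        rw [hab, Nat.mod_eq_of_lt (show M - 1 < M by omega)]
    _ = (b + 1 + (M - 1)) % M := (Nat.add_mod _ _ _).symm
    _ = (b + M) % M := by congr 1; omega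
    _ = b := by rw [Nat.add_mod_right]; exact Nat.mod_eq_of_lt hb

lemma mySuccPred {M : ℕ} (hM : 3 ≤ M) {b : ℕ} (hb : b < M) :
    ((b + M - 1) % M + 1) % M = b := by
  calc ((b + M - 1) % M + 1) % M = ((b + M - 1) % M + 1 % M) % M := by
        rw [Nat.mod_eq_of_lt (show 1 < M by omega)]
    _ = (b + M - 1 + 1) % M := (Nat.add_mod _ _ _).symm
    _ = (b + M) % M := by congr 1; omega
    _ = b := by rw [Nat.add_mod_right]; exact Nat.mod_eq_of_lt hb

lemma myNe {M : ℕ} (hM : 3 ≤ M) {b : ℕ} (hb : b < M) :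
    (b + 1) % M ≠ (b + M - 1) % M := by
  intro heq
  have h1 : ((b + 1) % M + 1) % M = (b + 2) % M := by
    calc ((b + 1) % M + 1) % M = ((b + 1) % M + 1 % M) % M := by
          rw [Nat.mod_eq_of_lt (show 1 < M by omega)]
      _ = (b + 1 + 1) % M := (Nat.add_mod _ _ _).symm
      _ = (b + 2) % M := by congr 1
  have h2 : (b + 2) % M = b := by
    rw [← h1, heq, mySuccPred hM hb]
  have h3 : Nat.ModEq M (b + 2) b := by
    unfold Nat.ModEq; rw [h2, Nat.mod_eq_of_lt hb]
  have h4 : M ∣ b + 2 - b := (Nat.modEq_iff_dvd' (Nat.le_add_right b 2)).mp h3.symm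
  simp only [Nat.add_sub_cancel_left] at h4
  have := Nat.le_of_dvd (by omega) h4
  omega

/-- kernel vectors of the diagonally modulated adjacency matrix
of the prism graph on `2M` vertices. -/
theorem prism_general_dmam_kernel
    (M : ℕ) (hM : 3 ≤ M) (F : Type*) [Field F]
    (ω : F) (hω : orderOf ω = M)
    (A : Matrix (Fin (2 * M)) (Fin (2 * M)) F)
    (hA : ∀ i j, A i j =
      if (i.val < M ∧ j.val < M ∧ ((i.val + 1) % M = j.val ∨ (j.val + 1) % M = i.val)) ∨
         (M ≤ i.val ∧ M ≤ j.val ∧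
            ((i.val - M + 1) % M = j.val - M ∨ (j.val - M + 1) % M = i.val - M)) ∨
         (i.val + M = j.val) ∨ (j.val + M = i.val)
      then 1 else 0)
    (lam : ℕ → F) (hlam : ∀ t, lam t = ω ^ t + ω⁻¹ ^ t)
    (α₁ α₂ : F)
    (hα : ∀ t ∈ ({0, 1, M - 1} : Finset ℕ), (α₁ + lam t) * (α₂ + lam t) = 1)
    (αv : Fin (2 * M) → F) (hαv : ∀ i, αv i = if i.val < M then α₁ else α₂)
    (h : ℕ → Fin (2 * M) → F)
    (hh : ∀ t i, h t i =
      if i.val < M then ω ^ (t * i.val) else -(α₁ + lam t) * ω ^ (t * (i.val - M))) :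
    (∀ t ∈ ({0, 1, M - 1} : Finset ℕ),
      (Matrix.diagonal αv + A).mulVec (h t) = 0) ∧
    ((1 : F) ≠ ω → ω ≠ ω⁻¹ → (1 : F) ≠ ω⁻¹ →
      3 ≤ Module.finrank F (LinearMap.ker (Matrix.mulVecLin (Matrix.diagonal αv + A)))) := by
  have hωM : ω ^ M = 1 := by rw [← hω]; exact pow_orderOf_eq_one ω
  have hω0 : ω ≠ 0 := by
    intro h0; rw [h0] at hωM; simp [zero_pow (show M ≠ 0 by omega)] at hωM
  have hinv : ω ^ (M - 1) = ω⁻¹ := by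
    have h1 : ω * ω ^ (M - 1) = 1 := by
      rw [← pow_succ']; rw [show M - 1 + 1 = M by omega]; exact hωM
    exact eq_inv_of_mul_eq_one_right h1
  have hpow : ∀ t a : ℕ, ω ^ (t * (a % M)) = ω ^ (t * a) := by
    intro t a
    have he : t * a = t * (a % M) + M * (t * (a / M)) := by
      conv_lhs => rw [← Nat.mod_add_div a M]
      ring
    have h2 : ω ^ (M * (t * (a / M))) = 1 := by rw [pow_mul, hωM, one_pow]
    rw [he, pow_add, h2, mul_one]
  have key : ∀ t ∈ ({0, 1, M - 1} : Finset ℕ),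
      (Matrix.diagonal αv + A).mulVec (h t) = 0 := by
    intro t ht
    funext i
    rw [Matrix.add_mulVec]
    simp only [Pi.add_apply, Pi.zero_apply]
    have hdiag : (Matrix.diagonal αv).mulVec (h t) i = αv i * h t i := by
      simp [Matrix.mulVec_diagonal]
    have hAv : A.mulVec (h t) i = ∑ j, A i j * h t j := by
      simp [Matrix.mulVec, dotProduct]
    rw [hdiag, hAv]
    rcases lt_or_ge i.val M with hi | hi
    · -- top row
      have hk1 : (i.val + 1) % M < M := Nat.mod_lt _ (by omega)
      have hk2 : (i.val + M - 1) % M < M := Nat.mod_lt _ (by omega)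
      have hne12 : (i.val + 1) % M ≠ (i.val + M - 1) % M := myNe hM hi
      have hS : ∑ j, A i j * h t j =
          h t ⟨(i.val + 1) % M, by omega⟩ + h t ⟨(i.val + M - 1) % M, by omega⟩
          + h t ⟨i.val + M, by omega⟩ := by
        have hsub : ∑ j ∈ ({⟨(i.val + 1) % M, by omega⟩, ⟨(i.val + M - 1) % M, by omega⟩,
              ⟨i.val + M, by omega⟩} : Finset (Fin (2 * M))), A i j * h t j
            = ∑ j, A i j * h t j := by
          apply Finset.sum_subset (Finset.subset_univ _)
          intro j _ hj
          simp only [Finset.mem_insert, Finset.mem_singleton, not_or] at hj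
          obtain ⟨hj1', hj2', hj3'⟩ := hj
          rw [hA, if_neg, zero_mul]
          rintro (⟨_, hjM, hor | hor⟩ | ⟨hiM, _, _⟩ | hor | hor)
          · exact hj1' (Fin.ext hor.symm)
          · exact hj2' (Fin.ext (myPred hM hjM hor).symm)
          · omega
          · exact hj3' (Fin.ext hor.symm)
          · omega
        rw [← hsub]
        rw [Finset.sum_insert (by
              simp only [Finset.mem_insert, Finset.mem_singleton, Fin.mk.injEq, not_or]
              exact ⟨hne12, by omega⟩),
            Finset.sum_insert (by
              simp only [Finset.mem_singleton, Fin.mk.injEq]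
              omega),
            Finset.sum_singleton]
        have hA1 : A i ⟨(i.val + 1) % M, by omega⟩ = 1 := by
          rw [hA, if_pos]; left; exact ⟨hi, hk1, Or.inl rfl⟩
        have hA2 : A i ⟨(i.val + M - 1) % M, by omega⟩ = 1 := by
          rw [hA, if_pos]; left; exact ⟨hi, hk2, Or.inr (mySuccPred hM hi)⟩
        have hA3 : A i ⟨i.val + M, by omega⟩ = 1 := by
          rw [hA, if_pos]; right; right; left; rfl
        rw [hA1, hA2, hA3, one_mul, one_mul, one_mul]
        ring
      rw [hS]
      have hvv1 : h t ⟨(i.val + 1) % M, by omega⟩ = ω ^ (t * i.val) * ω ^ t := by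
        rw [hh, if_pos hk1, hpow,
          show t * (i.val + 1) = t * i.val + t by ring, pow_add]
      have hvv2 : h t ⟨(i.val + M - 1) % M, by omega⟩ = ω ^ (t * i.val) * ω⁻¹ ^ t := by
        rw [hh, if_pos hk2, hpow,
          show t * (i.val + M - 1) = t * i.val + (M - 1) * t by
            rw [show i.val + M - 1 = i.val + (M - 1) by omega]; ring,
          pow_add, show ω ^ ((M - 1) * t) = ω⁻¹ ^ t by rw [pow_mul, hinv]]
      have hvv3 : h t ⟨i.val + M, by omega⟩ = -(α₁ + lam t) * ω ^ (t * i.val) := by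
        rw [hh, if_neg (by simp only [Fin.val_mk]; omega)]
        simp only [Fin.val_mk, Nat.add_sub_cancel]
      have hvi : h t i = ω ^ (t * i.val) := by rw [hh, if_pos hi]
      have hαi : αv i = α₁ := by rw [hαv, if_pos hi]
      rw [hvv1, hvv2, hvv3, hvi, hαi, hlam]
      ring
    · -- bottom row
      have hkM : i.val - M < M := by omega
      have hk1 : (i.val - M + 1) % M < M := Nat.mod_lt _ (by omega)
      have hk2 : (i.val - M + M - 1) % M < M := Nat.mod_lt _ (by omega)
      have hne12 : (i.val - M + 1) % M ≠ (i.val - M + M - 1) % M := myNe hM hkM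
      have hS : ∑ j, A i j * h t j =
          h t ⟨M + (i.val - M + 1) % M, by omega⟩
          + h t ⟨M + (i.val - M + M - 1) % M, by omega⟩
          + h t ⟨i.val - M, by omega⟩ := by
        have hsub : ∑ j ∈ ({⟨M + (i.val - M + 1) % M, by omega⟩,
              ⟨M + (i.val - M + M - 1) % M, by omega⟩,
              ⟨i.val - M, by omega⟩} : Finset (Fin (2 * M))), A i j * h t j
            = ∑ j, A i j * h t j := by
          apply Finset.sum_subset (Finset.subset_univ _)
          intro j _ hj
          simp only [Finset.mem_insert, Finset.mem_singleton, not_or] at hj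
          obtain ⟨hj1', hj2', hj3'⟩ := hj
          rw [hA, if_neg, zero_mul]
          rintro (⟨hiM, _, _⟩ | ⟨_, hjM, hor | hor⟩ | hor | hor)
          · omega
          · exact hj1' (Fin.ext (show (j : ℕ) = M + (i.val - M + 1) % M by omega))
          · have := myPred hM (show j.val - M < M by omega) hor
            exact hj2' (Fin.ext (show (j : ℕ) = M + (i.val - M + M - 1) % M by omega))
          · omega
          · exact hj3' (Fin.ext (show (j : ℕ) = i.val - M by omega))
        rw [← hsub]
        rw [Finset.sum_insert (by
              simp only [Finset.mem_insert, Finset.mem_singleton, Fin.mk.injEq, not_or]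
              exact ⟨by omega, by omega⟩),
            Finset.sum_insert (by
              simp only [Finset.mem_singleton, Fin.mk.injEq]
              omega),
            Finset.sum_singleton]
        have hA1 : A i ⟨M + (i.val - M + 1) % M, by omega⟩ = 1 := by
          rw [hA, if_pos]; right; left
          exact ⟨hi, by simp only [Fin.val_mk]; omega,
            Or.inl (by show _ = M + (i.val - M + 1) % M - M; omega)⟩
        have hA2 : A i ⟨M + (i.val - M + M - 1) % M, by omega⟩ = 1 := by
          rw [hA, if_pos]; right; left
          refine ⟨hi, by simp only [Fin.val_mk]; omega, Or.inr ?_⟩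
          show (M + (i.val - M + M - 1) % M - M + 1) % M = i.val - M
          rw [show M + (i.val - M + M - 1) % M - M = (i.val - M + M - 1) % M by omega]
          exact mySuccPred hM hkM
        have hA3 : A i ⟨i.val - M, by omega⟩ = 1 := by
          rw [hA, if_pos]; right; right; right
          show i.val - M + M = i.val
          omega
        rw [hA1, hA2, hA3, one_mul, one_mul, one_mul]
        ring
      rw [hS]
      have hvv1 : h t ⟨M + (i.val - M + 1) % M, by omega⟩
          = -(α₁ + lam t) * (ω ^ (t * (i.val - M)) * ω ^ t) := by
        rw [hh, if_neg (by simp only [Fin.val_mk]; omega),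
          show (M + (i.val - M + 1) % M : ℕ) - M = (i.val - M + 1) % M by omega, hpow,
          show t * (i.val - M + 1) = t * (i.val - M) + t by ring, pow_add]
      have hvv2 : h t ⟨M + (i.val - M + M - 1) % M, by omega⟩
          = -(α₁ + lam t) * (ω ^ (t * (i.val - M)) * ω⁻¹ ^ t) := by
        rw [hh, if_neg (by simp only [Fin.val_mk]; omega),
          show (M + (i.val - M + M - 1) % M : ℕ) - M = (i.val - M + M - 1) % M by omega,
          hpow,
          show t * (i.val - M + M - 1) = t * (i.val - M) + (M - 1) * t by
            rw [show i.val - M + M - 1 = i.val - M + (M - 1) by omega]; ring,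
          pow_add, show ω ^ ((M - 1) * t) = ω⁻¹ ^ t by rw [pow_mul, hinv]]
      have hvv3 : h t ⟨i.val - M, by omega⟩ = ω ^ (t * (i.val - M)) := by
        rw [hh, if_pos hkM]
      have hvi : h t i = -(α₁ + lam t) * ω ^ (t * (i.val - M)) := by
        rw [hh, if_neg (by omega)]
      have hαi : αv i = α₂ := by rw [hαv, if_neg (by omega)]
      rw [hvv1, hvv2, hvv3, hvi, hαi]
      have hα' := hα t ht
      rw [hlam] at hα' ⊢
      linear_combination (-(ω ^ (t * (i.val - M)))) * hα'
  refine ⟨key, ?_⟩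
  intro h1 h2 h3
  classical
  have hker : ∀ t ∈ ({0, 1, M - 1} : Finset ℕ),
      h t ∈ LinearMap.ker (Matrix.mulVecLin (Matrix.diagonal αv + A)) := by
    intro t ht
    rw [LinearMap.mem_ker, Matrix.mulVecLin_apply]
    exact key t ht
  have hmem : ∀ r : Fin 3, (![0, 1, M - 1] : Fin 3 → ℕ) r ∈ ({0, 1, M - 1} : Finset ℕ) := by
    intro r; fin_cases r <;> simp
  have hdet : (Matrix.vandermonde (![1, ω, ω⁻¹] : Fin 3 → F)).det ≠ 0 := by
    rw [Ne, Matrix.det_vandermonde_eq_zero_iff]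
    rintro ⟨r, s, heq, hne⟩
    clear hα key hker hmem
    fin_cases r <;> fin_cases s <;> simp_all
  have hrows : LinearIndependent F (fun r => Matrix.vandermonde (![1, ω, ω⁻¹] : Fin 3 → F) r) :=
    Matrix.linearIndependent_rows_iff_isUnit.mpr
      ((Matrix.isUnit_iff_isUnit_det _).mpr (isUnit_iff_ne_zero.mpr hdet))
  set φ : (Fin (2 * M) → F) →ₗ[F] (Fin 3 → F) :=
    LinearMap.funLeft F F (fun s : Fin 3 => (⟨s.val, by omega⟩ : Fin (2 * M))) with hφdef
  have hφ : ∀ r : Fin 3, φ (h ((![0, 1, M - 1] : Fin 3 → ℕ) r))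
      = Matrix.vandermonde (![1, ω, ω⁻¹] : Fin 3 → F) r := by
    intro r
    funext s
    have hsM : (s : ℕ) < M := by omega
    show h ((![0, 1, M - 1] : Fin 3 → ℕ) r) ⟨s.val, by omega⟩
      = (![1, ω, ω⁻¹] : Fin 3 → F) r ^ (s : ℕ)
    rw [hh, if_pos (by simp only [Fin.val_mk]; omega)]
    simp only [Fin.val_mk]
    fin_cases r
    · simp
    · simp
    · show ω ^ ((M - 1) * (s : ℕ)) = ω⁻¹ ^ (s : ℕ)
      rw [pow_mul, hinv]
  have hind : LinearIndependent F (fun r : Fin 3 => h ((![0, 1, M - 1] : Fin 3 → ℕ) r)) := by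
    apply LinearIndependent.of_comp φ
    show LinearIndependent F fun r : Fin 3 => φ (h ((![0, 1, M - 1] : Fin 3 → ℕ) r))
    rw [show (fun r : Fin 3 => φ (h ((![0, 1, M - 1] : Fin 3 → ℕ) r)))
        = fun r => Matrix.vandermonde (![1, ω, ω⁻¹] : Fin 3 → F) r from funext fun r => hφ r]
    exact hrows
  have hw : LinearIndependent F (fun r : Fin 3 =>
      (⟨h ((![0, 1, M - 1] : Fin 3 → ℕ) r), hker _ (hmem r)⟩ :
        LinearMap.ker (Matrix.mulVecLin (Matrix.diagonal αv + A)))) := by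
    apply LinearIndependent.of_comp
      (LinearMap.ker (Matrix.mulVecLin (Matrix.diagonal αv + A))).subtype
    exact hind
  have hcard := hw.fintype_card_le_finrank
  simpa using hcard
end
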